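/- arXiv:1304.0292 — 2 statements merged into one kernel-verified Lean document; each statement's English description precedes it below -/
import Mathlib

section
/- Let E be a real inner product space, λ ∈ ℝ, and f : E → ℝ a λ-concave continuously differentiable function. Let α, β : [0, ∞) → E be two f-gradient curves with α(0) = p and β(0) = q. Then for all t_p ≥ t_q ≥ 0, ‖α(t_p) − β(t_q)‖² ≤ e^{2λ·t_q}·[ ‖p − q‖² + (2·f(p) − 2·f(q) + λ·‖p − q‖²)·θ_λ(t_p − t_q) + ‖∇f(p)‖²·θ_λ(t_p − t_q)² ], where θ_λ(t) = t if λ = 0 and θ_λ(t) = (e^{λt} − 1)/λ if λ ≠ 0. -/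
/-!
λ-concavity gives the tangent inequality `f y ≤ f x + ⟪∇f x, y - x⟫ + λ/2 ‖y - x‖²`, hence
`⟪∇f x - ∇f y, x - y⟫ ≤ λ ‖x - y‖²`. By Grönwall, two gradient curves then drift apart at most
like `e^{λt}`; comparing `α` with its own time shift shows that `‖∇f ∘ α‖²` grows at most like
`e^{2λt}`, so `f ∘ α ≤ f p + ‖∇f p‖² θ_{2λ}`. Fed into the tangent inequality at `α t` towards `q`,
this gives `d/dt (‖α t - q‖² - R t) ≤ λ (‖α t - q‖² - R t)` for the bracket `R` of the theorem, so
`‖α s - q‖² ≤ R s`. Finally, `α` restarted at time `tp - tq` and `β` are compared at time `tq`.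
-/

open scoped RealInnerProductSpace

/-- The function `θ_λ` of Lemma 2.4. -/
noncomputable def thetaLam (lam t : ℝ) : ℝ :=
  if lam = 0 then t else (Real.exp (lam * t) - 1) / lam

open Set Filter Topology Real

lemma thetaLam_zero (lam : ℝ) : thetaLam lam 0 = 0 := by
  by_cases h : lam = 0 <;> simp [thetaLam, h]

lemma hasDerivAt_thetaLam (lam t : ℝ) : HasDerivAt (thetaLam lam) (exp (lam * t)) t := by
  by_cases h : lam = 0
  · subst h
    have : thetaLam 0 = id := funext fun u => by simp [thetaLam]
    simpa [this] using hasDerivAt_id t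
  · have h1 := (((hasDerivAt_id' t).const_mul lam).exp.sub_const 1).div_const lam
    rw [mul_one, mul_div_cancel_right₀ _ h] at h1
    exact h1.congr_of_eventuallyEq (.of_eq (funext fun u => by simp [thetaLam, h]))

lemma mul_thetaLam_add_one (lam t : ℝ) : lam * thetaLam lam t + 1 = exp (lam * t) := by
  by_cases h : lam = 0
  · simp [thetaLam, h]
  · simp only [thetaLam, if_neg h]
    field_simp
    ring

lemma thetaLam_two_mul (lam t : ℝ) :
    thetaLam (2 * lam) t = thetaLam lam t * (lam * thetaLam lam t + 2) / 2 := by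
  by_cases h : lam = 0
  · simp [thetaLam, h]
  · simp only [thetaLam, if_neg h, mul_ne_zero two_ne_zero h, if_false]
    rw [mul_assoc, two_mul, exp_add]
    field_simp
    ring

lemma le_mul_exp_of_hasDerivWithinAt_Ici {v v' : ℝ → ℝ} {K : ℝ}
    (hv : ∀ t ∈ Ici (0 : ℝ), HasDerivWithinAt v (v' t) (Ici 0) t)
    (hbound : ∀ t ∈ Ici (0 : ℝ), v' t ≤ K * v t) {t : ℝ} (ht : 0 ≤ t) :
    v t ≤ v 0 * exp (K * t) := by
  have := le_gronwallBound_of_liminf_deriv_right_le (ε := 0) (b := t)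
    (fun x hx => ((hv x hx.1).continuousWithinAt).mono Icc_subset_Ici_self)
    (fun x hx r hr => (((hv x hx.1).mono (Ici_subset_Ici.mpr hx.1)).liminf_right_slope_le
      hr).mono fun z hz => by rwa [slope_def_field, div_eq_inv_mul] at hz)
    le_rfl (fun x hx => by simpa using hbound x hx.1) t ⟨ht, le_rfl⟩
  rwa [sub_zero, gronwallBound_ε0] at this

lemma ConcaveOn.le_add_of_hasFDerivAt {E : Type*} [NormedAddCommGroup E] [NormedSpace ℝ E]
    {F : E → ℝ} {F' : E →L[ℝ] ℝ} {x : E} (hF : ConcaveOn ℝ univ F) (hF' : HasFDerivAt F F' x)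
    (y : E) : F y ≤ F x + F' (y - x) := by
  let A : ℝ →ᵃ[ℝ] E := AffineMap.lineMap x y
  have hA : ConcaveOn ℝ univ (F ∘ A) := by simpa using hF.comp_affineMap A
  have hA' : HasDerivAt (F ∘ A) (F' (y - x)) 0 := by
    refine HasFDerivAt.comp_hasDerivAt (0 : ℝ) ?_ AffineMap.hasDerivAt_lineMap
    simpa [A] using hF'
  have := hA.slope_le_of_hasDerivAt (mem_univ 0) (mem_univ 1) zero_lt_one hA'
  simp only [slope_def_field, Function.comp_apply, AffineMap.lineMap_apply_one,
    AffineMap.lineMap_apply_zero, sub_zero, div_one, A] at this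
  linarith

section Concave

variable {E : Type*} [NormedAddCommGroup E] [InnerProductSpace ℝ E] {lam : ℝ} {f : E → ℝ}
  {g : E → E}

lemma le_add_inner_add_of_concaveOn
    (hconc : ConcaveOn ℝ univ (fun x => f x - lam / 2 * ‖x‖ ^ 2))
    (hg : ∀ x, HasFDerivAt f (innerSL ℝ (g x)) x) (x y : E) :
    f y ≤ f x + ⟪g x, y - x⟫ + lam / 2 * ‖y - x‖ ^ 2 := by
  have hF' := (hg x).sub ((hasStrictFDerivAt_norm_sq x).hasFDerivAt.const_mul (lam / 2))
  have := hconc.le_add_of_hasFDerivAt hF' y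
  simp only [sub_apply, smul_apply, innerSL_apply_apply, smul_eq_mul, nsmul_eq_mul,
    Nat.cast_ofNat, inner_sub_right, real_inner_self_eq_norm_sq] at this
  rw [norm_sub_sq_real, real_inner_comm x y, inner_sub_right]
  linarith

lemma inner_sub_sub_le_of_concaveOn
    (hconc : ConcaveOn ℝ univ (fun x => f x - lam / 2 * ‖x‖ ^ 2))
    (hg : ∀ x, HasFDerivAt f (innerSL ℝ (g x)) x) (x y : E) :
    ⟪g x - g y, x - y⟫ ≤ lam * ‖x - y‖ ^ 2 := by
  have hxy := le_add_inner_add_of_concaveOn hconc hg x y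
  have hyx := le_add_inner_add_of_concaveOn hconc hg y x
  rw [← neg_sub x y, inner_neg_right, norm_neg] at hxy
  rw [inner_sub_left]
  linarith

end Concave

section GradientCurve

variable {E : Type*} [NormedAddCommGroup E] [InnerProductSpace ℝ E] {lam : ℝ} {f : E → ℝ}
  {g : E → E} {α β : ℝ → E}

def IsGradientCurve (g : E → E) (α : ℝ → E) : Prop :=
  ∀ t ∈ Ici (0 : ℝ), HasDerivWithinAt α (g (α t)) (Ici 0) t

lemma IsGradientCurve.comp_add_const (hα : IsGradientCurve g α) {s : ℝ} (hs : 0 ≤ s) :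
    IsGradientCurve g (fun t => α (t + s)) := by
  intro t ht
  have := (hα (t + s) (add_nonneg ht hs)).scomp t ((hasDerivAt_add_const_iff s).2
    (hasDerivAt_id' t)).hasDerivWithinAt fun u (hu : u ∈ Ici 0) => add_nonneg hu hs
  simpa only [Function.comp_def, one_smul] using this

lemma IsGradientCurve.tendsto_slope_zero (hα : IsGradientCurve g α) :
    Tendsto (slope α 0) (𝓝[>] 0) (𝓝 (g (α 0))) :=
  (hasDerivWithinAt_iff_tendsto_slope' (lt_irrefl 0)).1
    ((hα 0 self_mem_Ici).mono Ioi_subset_Ici_self)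

lemma IsGradientCurve.norm_sub_sq_le
    (hmono : ∀ x y : E, ⟪g x - g y, x - y⟫ ≤ lam * ‖x - y‖ ^ 2)
    (hα : IsGradientCurve g α) (hβ : IsGradientCurve g β) {t : ℝ} (ht : 0 ≤ t) :
    ‖α t - β t‖ ^ 2 ≤ ‖α 0 - β 0‖ ^ 2 * exp (2 * lam * t) := by
  refine le_mul_exp_of_hasDerivWithinAt_Ici (fun u hu => ((hα u hu).sub (hβ u hu)).norm_sq)
    (fun u _ => ?_) ht
  show 2 * ⟪α u - β u, g (α u) - g (β u)⟫ ≤ 2 * lam * ‖α u - β u‖ ^ 2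
  have := hmono (α u) (β u)
  rw [real_inner_comm] at this
  linarith

lemma IsGradientCurve.norm_sq_le
    (hmono : ∀ x y : E, ⟪g x - g y, x - y⟫ ≤ lam * ‖x - y‖ ^ 2)
    (hα : IsGradientCurve g α) {t : ℝ} (ht : 0 ≤ t) :
    ‖g (α t)‖ ^ 2 ≤ ‖g (α 0)‖ ^ 2 * exp (2 * lam * t) := by
  have hαt := hα.comp_add_const ht
  refine le_of_tendsto_of_tendsto (by simpa using (hαt.tendsto_slope_zero.norm.pow 2))
    ((hα.tendsto_slope_zero.norm.pow 2).mul_const _) ?_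
  filter_upwards [self_mem_nhdsWithin] with h (hh : 0 < h)
  have := (hα.comp_add_const hh.le).norm_sub_sq_le hmono hα ht
  simp only [slope_def_module, norm_smul, mul_pow, sub_zero, zero_add, add_comm h t] at this ⊢
  rw [mul_assoc]
  gcongr

lemma IsGradientCurve.le_add_norm_sq_mul_thetaLam
    (hg : ∀ x, HasFDerivAt f (innerSL ℝ (g x)) x)
    (hmono : ∀ x y : E, ⟪g x - g y, x - y⟫ ≤ lam * ‖x - y‖ ^ 2)
    (hα : IsGradientCurve g α) {t : ℝ} (ht : 0 ≤ t) :
    f (α t) ≤ f (α 0) + ‖g (α 0)‖ ^ 2 * thetaLam (2 * lam) t := by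
  have hv : ∀ u ∈ Ici (0 : ℝ),
      HasDerivWithinAt (fun r => f (α r) - ‖g (α 0)‖ ^ 2 * thetaLam (2 * lam) r)
      (‖g (α u)‖ ^ 2 - ‖g (α 0)‖ ^ 2 * exp (2 * lam * u)) (Ici 0) u := fun u hu => by
    have hfα := (hg (α u)).comp_hasDerivWithinAt u (hα u hu)
    rw [innerSL_apply_apply, real_inner_self_eq_norm_sq] at hfα
    exact hfα.sub ((hasDerivAt_thetaLam _ u).const_mul _).hasDerivWithinAt
  have := le_mul_exp_of_hasDerivWithinAt_Ici (K := 0) hv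
    (fun u hu => by simpa using hα.norm_sq_le hmono hu) ht
  simp only [thetaLam_zero, zero_mul, exp_zero, mul_one] at this
  linarith

lemma IsGradientCurve.norm_sub_sq_le_of_concaveOn
    (hconc : ConcaveOn ℝ univ (fun x => f x - lam / 2 * ‖x‖ ^ 2))
    (hg : ∀ x, HasFDerivAt f (innerSL ℝ (g x)) x) (hα : IsGradientCurve g α) (q : E)
    {t : ℝ} (ht : 0 ≤ t) :
    ‖α t - q‖ ^ 2 ≤ ‖α 0 - q‖ ^ 2
      + (2 * f (α 0) - 2 * f q + lam * ‖α 0 - q‖ ^ 2) * thetaLam lam t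
      + ‖g (α 0)‖ ^ 2 * thetaLam lam t ^ 2 := by
  set B := 2 * f (α 0) - 2 * f q + lam * ‖α 0 - q‖ ^ 2
  set c := ‖g (α 0)‖ ^ 2
  set v : ℝ → ℝ := fun r =>
    ‖α r - q‖ ^ 2 - (‖α 0 - q‖ ^ 2 + B * thetaLam lam r + c * thetaLam lam r ^ 2) with hv
  have hv' : ∀ u ∈ Ici (0 : ℝ), HasDerivWithinAt v (2 * ⟪α u - q, g (α u)⟫
      - (B + 2 * c * thetaLam lam u) * exp (lam * u)) (Ici 0) u := fun u hu => by
    have hθ := hasDerivAt_thetaLam lam u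
    have hpoly := ((hθ.const_mul B).const_add (‖α 0 - q‖ ^ 2)).add ((hθ.pow 2).const_mul c)
    refine (((hα u hu).sub_const q).norm_sq.sub hpoly.hasDerivWithinAt).congr_deriv ?_
    push_cast
    ring
  have hbound : ∀ u ∈ Ici (0 : ℝ),
      2 * ⟪α u - q, g (α u)⟫ - (B + 2 * c * thetaLam lam u) * exp (lam * u) ≤ lam * v u :=
    fun u hu => by
      have htangent := le_add_inner_add_of_concaveOn hconc hg (α u) q
      rw [← neg_sub, inner_neg_right, norm_neg, real_inner_comm] at htangent
      have hdecay := hα.le_add_norm_sq_mul_thetaLam hg (inner_sub_sub_le_of_concaveOn hconc hg) hu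
      rw [thetaLam_two_mul] at hdecay
      rw [← mul_thetaLam_add_one, hv]
      linarith
  have := le_mul_exp_of_hasDerivWithinAt_Ici hv' hbound ht
  simpa [hv, thetaLam_zero] using this

end GradientCurve

theorem gradient_curves_dist_est_two_times_general
    {E : Type*} [NormedAddCommGroup E] [InnerProductSpace ℝ E]
    (lam : ℝ) (f : E → ℝ) (g : E → E)
    (hconc : ConcaveOn ℝ Set.univ (fun x => f x - lam / 2 * ‖x‖ ^ 2))
    (hg : ∀ x, HasFDerivAt f (innerSL ℝ (g x)) x)
    (α β : ℝ → E)
    (hα : ∀ t ∈ Set.Ici (0 : ℝ), HasDerivWithinAt α (g (α t)) (Set.Ici 0) t)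
    (hβ : ∀ t ∈ Set.Ici (0 : ℝ), HasDerivWithinAt β (g (β t)) (Set.Ici 0) t)
    (p q : E) (hp : α 0 = p) (hq : β 0 = q) :
    ∀ tp tq : ℝ, 0 ≤ tq → tq ≤ tp →
      ‖α tp - β tq‖ ^ 2 ≤ Real.exp (2 * lam * tq) *
        (‖p - q‖ ^ 2
          + (2 * f p - 2 * f q + lam * ‖p - q‖ ^ 2) * thetaLam lam (tp - tq)
          + ‖g p‖ ^ 2 * (thetaLam lam (tp - tq)) ^ 2) := by
  intro tp tq htq hle
  have hs : 0 ≤ tp - tq := sub_nonneg.2 hle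
  have hsame := (IsGradientCurve.comp_add_const hα hs).norm_sub_sq_le
    (inner_sub_sub_le_of_concaveOn hconc hg) hβ htq
  have hpoint := IsGradientCurve.norm_sub_sq_le_of_concaveOn hconc hg hα q hs
  simp only [add_sub_cancel, zero_add, hq] at hsame
  rw [hp] at hpoint
  rw [mul_comm]
  exact hsame.trans (mul_le_mul_of_nonneg_right hpoint (exp_pos _).le)

/-- Distance estimate between two gradient curves of a λ-concave function at different
times (linear model of Lemma 2.4 (iii)). -/
theorem gradient_curves_dist_est_two_times
    {E : Type*} [NormedAddCommGroup E] [InnerProductSpace ℝ E]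
    (lam : ℝ) (f : E → ℝ) (g : E → E)
    (hconc : ConcaveOn ℝ Set.univ (fun x => f x - lam / 2 * ‖x‖ ^ 2))
    (hg : ∀ x, HasFDerivAt f (innerSL ℝ (g x)) x) (hgc : Continuous g)
    (α β : ℝ → E)
    (hα : ∀ t ∈ Set.Ici (0 : ℝ), HasDerivWithinAt α (g (α t)) (Set.Ici 0) t)
    (hβ : ∀ t ∈ Set.Ici (0 : ℝ), HasDerivWithinAt β (g (β t)) (Set.Ici 0) t)
    (p q : E) (hp : α 0 = p) (hq : β 0 = q) :
    ∀ tp tq : ℝ, 0 ≤ tq → tq ≤ tp →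
      ‖α tp - β tq‖ ^ 2 ≤ Real.exp (2 * lam * tq) *
        (‖p - q‖ ^ 2
          + (2 * f p - 2 * f q + lam * ‖p - q‖ ^ 2) * thetaLam lam (tp - tq)
          + ‖g p‖ ^ 2 * (thetaLam lam (tp - tq)) ^ 2) :=
  gradient_curves_dist_est_two_times_general lam f g hconc hg α β hα hβ p q hp hq
end

section
/- Let E be a finite-dimensional real inner product space and λ ∈ ℝ. Let fₙ, f : E → ℝ be λ-concave continuously differentiable functions such that fₙ → f pointwise on E. Let αₙ, α : [0, ∞) → E be gradient curves, i.e. differentiable curves with αₙ′(t) = ∇fₙ(αₙ(t)) and α′(t) = ∇f(α(t)) for all t ≥ 0, and suppose αₙ(0) → α(0). Then αₙ(t) → α(t) for every t ≥ 0. -/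
/-!
Subtracting `lam / 2 * ‖·‖ ^ 2` makes the functions concave, so each gradient `g n` satisfies the
one-sided Lipschitz bound `⟪g n x - g n y, x - y⟫ ≤ lam * ‖x - y‖ ^ 2`. Splitting
`g n (α n t) - glim (αlim t)` at `g n (αlim t)`, the squared distance `w = ‖α n t - αlim t‖ ^ 2`
satisfies `w' ≤ (2|lam| + 1) w + ‖g n (αlim t) - glim (αlim t)‖ ^ 2`, so by Gronwall it suffices
that `∫₀ᵗ ‖g n (αlim s) - glim (αlim s)‖ ^ 2 ds → 0`. For concave functions, pointwise
convergence of the values forces pointwise convergence of the gradients (squeeze them between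
difference quotients) and, in finite dimension, a uniform bound of the gradients on balls (bound
the functions below on a polytope containing the ball); dominated convergence concludes.
-/

open scoped RealInnerProductSpace
open Filter Topology Set Metric Real

section Concave

variable {E : Type*} [NormedAddCommGroup E] [InnerProductSpace ℝ E] {φ : E → ℝ}

lemma HasFDerivAt.hasDerivAt_comp_lineMap {x G : E} (hG : HasFDerivAt φ (innerSL ℝ G) x)
    (y : E) : HasDerivAt (φ ∘ (AffineMap.lineMap x y : ℝ → E)) ⟪G, y - x⟫ 0 := by
  have hG0 : HasFDerivAt φ (innerSL ℝ G) ((AffineMap.lineMap x y : ℝ → E) 0) := by simpa using hG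
  simpa using hG0.comp_hasDerivAt (0 : ℝ) AffineMap.hasDerivAt_lineMap

lemma ConcaveOn.slope_comp_lineMap_le (hφ : ConcaveOn ℝ univ φ) {x G : E}
    (hG : HasFDerivAt φ (innerSL ℝ G) x) (y : E) {s : ℝ} (hs : 0 < s) :
    slope (φ ∘ (AffineMap.lineMap x y : ℝ → E)) 0 s ≤ ⟪G, y - x⟫ := by
  have hline : ConcaveOn ℝ univ (φ ∘ (AffineMap.lineMap x y : ℝ → E)) := by
    simpa using hφ.comp_affineMap (AffineMap.lineMap (k := ℝ) x y)
  exact hline.slope_le_of_hasDerivAt (mem_univ _) (mem_univ _) hs (hG.hasDerivAt_comp_lineMap y)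

lemma ConcaveOn.le_add_inner_sub (hφ : ConcaveOn ℝ univ φ) {x G : E}
    (hG : HasFDerivAt φ (innerSL ℝ G) x) (y : E) : φ y ≤ φ x + ⟪G, y - x⟫ := by
  have := hφ.slope_comp_lineMap_le hG y one_pos
  simp only [slope_def_field, Function.comp_apply, AffineMap.lineMap_apply_one,
    AffineMap.lineMap_apply_zero, sub_zero, div_one] at this
  linarith

lemma ConcaveOn.inner_sub_gradient_nonpos (hφ : ConcaveOn ℝ univ φ) {G : E → E}
    (hG : ∀ x, HasFDerivAt φ (innerSL ℝ (G x)) x) (x y : E) : ⟪G x - G y, x - y⟫ ≤ 0 := by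
  have hxy := hφ.le_add_inner_sub (hG x) y
  have hyx := hφ.le_add_inner_sub (hG y) x
  rw [← neg_sub x y, inner_neg_right] at hxy
  rw [inner_sub_left]
  linarith

lemma HasFDerivAt.sub_half_mul_norm_sq {f : E → ℝ} {x G : E} (hf : HasFDerivAt f (innerSL ℝ G) x)
    (lam : ℝ) :
    HasFDerivAt (fun y => f y - lam / 2 * ‖y‖ ^ 2) (innerSL ℝ (G - lam • x)) x := by
  have hsq : HasFDerivAt (fun y => f y - lam / 2 * ‖y‖ ^ 2)
      (innerSL ℝ G - (lam / 2) • 2 • innerSL ℝ x) x :=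
    hf.sub ((hasStrictFDerivAt_norm_sq x).hasFDerivAt.const_mul (lam / 2))
  convert hsq using 1
  ext v
  simp only [map_sub, map_smul, sub_apply, coe_innerSL_apply, smul_apply, smul_eq_mul,
    nsmul_eq_mul, Nat.cast_ofNat, sub_right_inj]
  ring

lemma inner_sub_le_of_concaveOn_sub_mul_norm_sq {f : E → ℝ} {g : E → E} {lam : ℝ}
    (hf : ConcaveOn ℝ univ (fun y => f y - lam / 2 * ‖y‖ ^ 2))
    (hg : ∀ x, HasFDerivAt f (innerSL ℝ (g x)) x) (x y : E) :
    ⟪g x - g y, x - y⟫ ≤ lam * ‖x - y‖ ^ 2 := by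
  have h := hf.inner_sub_gradient_nonpos (fun x => (hg x).sub_half_mul_norm_sq lam) x y
  rw [show g x - lam • x - (g y - lam • y) = (g x - g y) - lam • (x - y) by
    rw [smul_sub]; abel, inner_sub_left, real_inner_smul_left, real_inner_self_eq_norm_sq] at h
  linarith

lemma ConcaveOn.mul_norm_le_sub (hφ : ConcaveOn ℝ univ φ) {x G : E}
    (hG : HasFDerivAt φ (innerSL ℝ G) x) {r L : ℝ} (hr : 0 ≤ r)
    (hL : ∀ y ∈ closedBall x r, L ≤ φ y) : r * ‖G‖ ≤ φ x - L := by
  rcases eq_or_ne G 0 with rfl | hG0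
  · simpa using hL x (mem_closedBall_self hr)
  have hnorm : 0 < ‖G‖ := norm_pos_iff.2 hG0
  set y := x - (r / ‖G‖) • G
  have hy : y ∈ closedBall x r := by
    simp [y, norm_smul, abs_of_nonneg hr, div_mul_cancel₀ _ hnorm.ne']
  have hsupp := hφ.le_add_inner_sub hG y
  rw [show y - x = -((r / ‖G‖) • G) by simp [y], inner_neg_right, real_inner_smul_right,
    real_inner_self_eq_norm_sq, pow_two, ← mul_assoc, div_mul_cancel₀ _ hnorm.ne'] at hsupp
  linarith [hL y hy]

section Convergence

variable {φ : ℕ → E → ℝ} {φl : E → ℝ} {G : ℕ → E} {Gl y : E}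

lemma eventually_lt_inner_gradient_of_tendsto (hφ : ∀ n, ConcaveOn ℝ univ (φ n))
    (hG : ∀ n, HasFDerivAt (φ n) (innerSL ℝ (G n)) y) (hGl : HasFDerivAt φl (innerSL ℝ Gl) y)
    (hlim : ∀ z, Tendsto (fun n => φ n z) atTop (𝓝 (φl z))) (v : E) {a : ℝ}
    (ha : a < ⟪Gl, v⟫) : ∀ᶠ n in atTop, a < ⟪G n, v⟫ := by
  set L : ℝ → E := ⇑(AffineMap.lineMap (k := ℝ) y (y + v))
  have hslope : Tendsto (slope (φl ∘ L) 0) (𝓝[>] 0) (𝓝 ⟪Gl, v⟫) := by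
    have hd := hGl.hasDerivAt_comp_lineMap (y + v)
    rw [add_sub_cancel_left] at hd
    exact (hasDerivAt_iff_tendsto_slope.1 hd).mono_left
      (nhdsWithin_mono 0 fun s (hs : s ∈ Ioi 0) => ne_of_gt hs)
  obtain ⟨s, hs, hs0⟩ := ((hslope.eventually (lt_mem_nhds ha)).and self_mem_nhdsWithin).exists
  have hslope_n : Tendsto (fun n => slope (φ n ∘ L) 0 s) atTop (𝓝 (slope (φl ∘ L) 0 s)) := by
    simp only [slope_def_field, Function.comp_apply]
    exact ((hlim _).sub (hlim _)).div_const _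
  filter_upwards [hslope_n.eventually (lt_mem_nhds hs)] with n hn
  simpa using hn.trans_le ((hφ n).slope_comp_lineMap_le (hG n) (y + v) hs0)

lemma tendsto_inner_gradient_of_tendsto (hφ : ∀ n, ConcaveOn ℝ univ (φ n))
    (hG : ∀ n, HasFDerivAt (φ n) (innerSL ℝ (G n)) y) (hGl : HasFDerivAt φl (innerSL ℝ Gl) y)
    (hlim : ∀ z, Tendsto (fun n => φ n z) atTop (𝓝 (φl z))) (v : E) :
    Tendsto (fun n => ⟪G n, v⟫) atTop (𝓝 ⟪Gl, v⟫) := by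
  refine tendsto_order.2 ⟨fun a ha => eventually_lt_inner_gradient_of_tendsto hφ hG hGl hlim v ha,
    fun b hb => ?_⟩
  simpa using
    eventually_lt_inner_gradient_of_tendsto hφ hG hGl hlim (-v) (a := -b) (by simpa using hb)

end Convergence

variable [FiniteDimensional ℝ E] {ι : Type*}

lemma tendsto_of_forall_tendsto_inner {l : Filter ι} {u : ι → E} {a : E}
    (h : ∀ v, Tendsto (fun i => ⟪u i, v⟫) l (𝓝 ⟪a, v⟫)) :
    Tendsto u l (𝓝 a) := by
  set b := stdOrthonormalBasis ℝ E
  have hsum : Tendsto (fun i => ∑ j, ⟪b j, u i⟫ • b j) l (𝓝 (∑ j, ⟪b j, a⟫ • b j)) :=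
    tendsto_finsetSum _ fun j _ => by
      simpa only [real_inner_comm (b j)] using (h (b j)).smul_const (b j)
  simpa only [b.sum_repr'] using hsum

lemma exists_forall_le_of_concaveOn {φ : ι → E → ℝ} (hφ : ∀ i, ConcaveOn ℝ univ (φ i))
    (hbelow : ∀ z, BddBelow (range fun i => φ i z)) (R : ℝ) :
    ∃ L, ∀ i, ∀ z ∈ closedBall (0 : E) R, L ≤ φ i z := by
  obtain ⟨u, hu, -⟩ :=
    (convex_closedBall (0 : E) R).exists_subset_interior_convexHull_finset_of_isCompact
      (isCompact_closedBall 0 R) univ_mem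
  obtain ⟨L, hL⟩ := u.finite_toSet.bddBelow_biUnion.2 fun p _ => hbelow p
  refine ⟨L, fun i z hz => ?_⟩
  obtain ⟨p, hp, hpz⟩ :=
    (hφ i).exists_le_of_mem_convexHull (subset_univ _) (interior_subset (hu hz))
  exact (hL (mem_biUnion hp ⟨i, rfl⟩)).trans hpz

lemma exists_forall_norm_le_of_concaveOn {φ : ι → E → ℝ} {G : ι → E → E}
    (hφ : ∀ i, ConcaveOn ℝ univ (φ i)) (hG : ∀ i x, HasFDerivAt (φ i) (innerSL ℝ (G i x)) x)
    (hbelow : ∀ z, BddBelow (range fun i => φ i z)) (habove : BddAbove (range fun i => φ i 0))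
    (R : ℝ) : ∃ C, ∀ i, ∀ x ∈ closedBall (0 : E) R, ‖G i x‖ ≤ C := by
  obtain ⟨L, hL⟩ := exists_forall_le_of_concaveOn hφ hbelow (R + 1)
  obtain ⟨U, hU⟩ := habove
  refine ⟨2 * U - 2 * L, fun i x hx => ?_⟩
  rw [mem_closedBall_zero_iff] at hx
  have hball : ∀ y ∈ closedBall x 1, L ≤ φ i y := fun y hy =>
    hL i y (by
      rw [mem_closedBall_zero_iff]
      linarith [norm_le_norm_add_norm_sub' y x, mem_closedBall_iff_norm.1 hy])
  have hnorm := (hφ i).mul_norm_le_sub (hG i x) zero_le_one hball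
  have hneg : L ≤ φ i (-x) := hL i (-x) (by rw [mem_closedBall_zero_iff, norm_neg]; linarith)
  -- concavity at the midpoint `0` of `x` and `-x` bounds `φ i x` above
  have hmid := (hφ i).2 (mem_univ x) (mem_univ (-x)) (by norm_num : (0 : ℝ) ≤ 1 / 2)
    (by norm_num : (0 : ℝ) ≤ 1 / 2) (by norm_num)
  simp only [smul_neg, add_neg_cancel, smul_eq_mul] at hmid
  linarith [hU ⟨i, rfl⟩]

end Concave

lemma le_exp_mul_add_integral_of_hasDerivAt_le {w w' e : ℝ → ℝ} {K a b : ℝ} (hK : 0 ≤ K)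
    (hab : a ≤ b) (hw : ContinuousOn w (Icc a b)) (hw' : ∀ s ∈ Ioo a b, HasDerivAt w (w' s) s)
    (he : ContinuousOn e (Icc a b)) (he0 : ∀ s ∈ Icc a b, 0 ≤ e s)
    (hle : ∀ s ∈ Ioo a b, w' s ≤ K * w s + e s) :
    w b ≤ exp (K * (b - a)) * (w a + ∫ s in a..b, e s) := by
  set P : ℝ → ℝ := fun s => ∫ r in a..s, e r
  have hPc : ContinuousOn P (Icc a b) := by
    have := intervalIntegral.continuousOn_primitive_interval (μ := MeasureTheory.volume)
      (by rw [uIcc_of_le hab]; exact he.integrableOn_Icc)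
    rwa [uIcc_of_le hab] at this
  have hP' : ∀ s ∈ Ioo a b, HasDerivAt P (e s) s := fun s hs =>
    intervalIntegral.integral_hasDerivAt_right
      ((he.mono (Icc_subset_Icc_right hs.2.le)).intervalIntegrable_of_Icc hs.1.le)
      ((he.mono Ioo_subset_Icc_self).stronglyMeasurableAtFilter isOpen_Ioo s hs)
      (he.continuousAt (Icc_mem_nhds hs.1 hs.2))
  have hdecay : ∀ s, HasDerivAt (fun s => exp (-(K * (s - a)))) (exp (-(K * (s - a))) * -K) s :=
    fun s => by simpa using (((hasDerivAt_id s).sub_const a).const_mul K).neg.exp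
  set Φ : ℝ → ℝ := fun s => exp (-(K * (s - a))) * w s - P s
  have hanti : AntitoneOn Φ (Icc a b) := by
    refine antitoneOn_of_hasDerivWithinAt_nonpos (convex_Icc a b)
      (((continuous_exp.comp (by fun_prop)).continuousOn.mul hw).sub hPc) (fun s hs => ?_)
      (fun s hs => ?_) (f' := fun s => exp (-(K * (s - a))) * (w' s - K * w s) - e s)
    · rw [interior_Icc] at hs
      exact (((hdecay s).mul (hw' s hs)).sub (hP' s hs)).hasDerivWithinAt.congr_deriv (by ring)
    · rw [interior_Icc] at hs
      have hexp : exp (-(K * (s - a))) ≤ 1 := exp_le_one_iff.2 (by nlinarith [hs.1])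
      have he0s := he0 s (Ioo_subset_Icc_self hs)
      nlinarith [hle s hs, exp_pos (-(K * (s - a)))]
  have hΦ := hanti (left_mem_Icc.2 hab) (right_mem_Icc.2 hab) hab
  simp only [Φ, P, sub_self, mul_zero, neg_zero, exp_zero, one_mul,
    intervalIntegral.integral_same] at hΦ
  calc w b = exp (K * (b - a)) * (exp (-(K * (b - a))) * w b) := by
        rw [← mul_assoc, ← exp_add, add_neg_cancel, exp_zero, one_mul]
    _ ≤ exp (K * (b - a)) * (w a + ∫ s in a..b, e s) := by gcongr; linarith

lemma tendsto_intervalIntegral_zero_of_norm_le {e : ℕ → ℝ → ℝ} {a b C : ℝ} (hab : a ≤ b)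
    (he : ∀ n, ContinuousOn (e n) (Icc a b)) (hC : ∀ n, ∀ s ∈ Icc a b, ‖e n s‖ ≤ C)
    (hlim : ∀ s ∈ Icc a b, Tendsto (fun n => e n s) atTop (𝓝 0)) :
    Tendsto (fun n => ∫ s in a..b, e n s) atTop (𝓝 0) := by
  have hsub : uIoc a b ⊆ Icc a b := by rw [uIoc_of_le hab]; exact Ioc_subset_Icc_self
  simpa using intervalIntegral.tendsto_integral_filter_of_dominated_convergence (fun _ => C)
    (Eventually.of_forall fun n => ((he n).mono hsub).aestronglyMeasurable measurableSet_uIoc)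
    (Eventually.of_forall fun n => MeasureTheory.ae_of_all _ fun s hs => hC n s (hsub hs))
    intervalIntegrable_const (MeasureTheory.ae_of_all _ fun s hs => hlim s (hsub hs))

section GradientCurve

variable {E : Type*} [NormedAddCommGroup E] [InnerProductSpace ℝ E]

lemma two_mul_inner_le_of_inner_sub_le {g₁ g₂ : E → E} {lam : ℝ}
    (hg₁ : ∀ x y, ⟪g₁ x - g₁ y, x - y⟫ ≤ lam * ‖x - y‖ ^ 2) (x z : E) :
    2 * ⟪x - z, g₁ x - g₂ z⟫ ≤ (2 * |lam| + 1) * ‖x - z‖ ^ 2 + ‖g₁ z - g₂ z‖ ^ 2 := by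
  have hsplit : ⟪x - z, g₁ x - g₂ z⟫ = ⟪g₁ x - g₁ z, x - z⟫ + ⟪x - z, g₁ z - g₂ z⟫ := by
    rw [real_inner_comm (x - z), ← inner_add_right, sub_add_sub_cancel]
  have hlam : lam * ‖x - z‖ ^ 2 ≤ |lam| * ‖x - z‖ ^ 2 :=
    mul_le_mul_of_nonneg_right (le_abs_self lam) (sq_nonneg _)
  have hcs : 2 * ⟪x - z, g₁ z - g₂ z⟫ ≤ ‖x - z‖ ^ 2 + ‖g₁ z - g₂ z‖ ^ 2 := by
    nlinarith [real_inner_le_norm (x - z) (g₁ z - g₂ z), two_mul_le_add_sq ‖x - z‖ ‖g₁ z - g₂ z‖]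
  linarith [hg₁ x z]

lemma norm_sub_sq_le_of_hasDerivWithinAt {g₁ g₂ : E → E} {γ₁ γ₂ : ℝ → E} {lam T : ℝ}
    (hT : 0 ≤ T) (hg₁ : ∀ x y, ⟪g₁ x - g₁ y, x - y⟫ ≤ lam * ‖x - y‖ ^ 2)
    (hg₁c : Continuous g₁) (hg₂c : Continuous g₂)
    (hγ₁ : ∀ t ∈ Ici (0 : ℝ), HasDerivWithinAt γ₁ (g₁ (γ₁ t)) (Ici 0) t)
    (hγ₂ : ∀ t ∈ Ici (0 : ℝ), HasDerivWithinAt γ₂ (g₂ (γ₂ t)) (Ici 0) t) :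
    ‖γ₁ T - γ₂ T‖ ^ 2 ≤ exp ((2 * |lam| + 1) * T) *
      (‖γ₁ 0 - γ₂ 0‖ ^ 2 + ∫ s in 0..T, ‖g₁ (γ₂ s) - g₂ (γ₂ s)‖ ^ 2) := by
  have hd : ∀ t ∈ Ici (0 : ℝ), HasDerivWithinAt (fun t => ‖γ₁ t - γ₂ t‖ ^ 2)
      (2 * ⟪γ₁ t - γ₂ t, g₁ (γ₁ t) - g₂ (γ₂ t)⟫) (Ici 0) t :=
    fun t ht => ((hγ₁ t ht).sub (hγ₂ t ht)).norm_sq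
  have hγ₂c : ContinuousOn γ₂ (Icc 0 T) := fun t ht =>
    (hγ₂ t ht.1).continuousWithinAt.mono Icc_subset_Ici_self
  simpa using le_exp_mul_add_integral_of_hasDerivAt_le (by positivity) hT
    (fun t ht => (hd t ht.1).continuousWithinAt.mono Icc_subset_Ici_self)
    (fun t ht => (hd t ht.1.le).hasDerivAt (Ici_mem_nhds ht.1))
    (((hg₁c.comp_continuousOn hγ₂c).sub (hg₂c.comp_continuousOn hγ₂c)).norm.pow 2)
    (fun _ _ => sq_nonneg _) (fun t _ => two_mul_inner_le_of_inner_sub_le hg₁ _ _)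

variable [FiniteDimensional ℝ E] {f : ℕ → E → ℝ} {flim : E → ℝ} {g : ℕ → E → E} {glim : E → E}
  {lam : ℝ}

lemma tendsto_gradient_of_tendsto
    (hconc : ∀ n, ConcaveOn ℝ univ (fun y => f n y - lam / 2 * ‖y‖ ^ 2))
    (hg : ∀ n x, HasFDerivAt (f n) (innerSL ℝ (g n x)) x)
    (hglim : ∀ x, HasFDerivAt flim (innerSL ℝ (glim x)) x)
    (hptws : ∀ y, Tendsto (fun n => f n y) atTop (𝓝 (flim y))) (x : E) :
    Tendsto (fun n => g n x) atTop (𝓝 (glim x)) := by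
  have hshift := tendsto_of_forall_tendsto_inner <| tendsto_inner_gradient_of_tendsto hconc
    (fun n => (hg n x).sub_half_mul_norm_sq lam) ((hglim x).sub_half_mul_norm_sq lam)
    (fun y => (hptws y).sub_const _)
  simpa using hshift.add_const (lam • x)

lemma exists_norm_gradient_sub_le
    (hconc : ∀ n, ConcaveOn ℝ univ (fun y => f n y - lam / 2 * ‖y‖ ^ 2))
    (hg : ∀ n x, HasFDerivAt (f n) (innerSL ℝ (g n x)) x)
    (hglim : ∀ x, HasFDerivAt flim (innerSL ℝ (glim x)) x)
    (hptws : ∀ y, Tendsto (fun n => f n y) atTop (𝓝 (flim y))) (R : ℝ) :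
    ∃ C, ∀ n, ∀ x ∈ closedBall (0 : E) R, ‖g n x - glim x‖ ≤ C := by
  have hlim : ∀ y, Tendsto (fun n => f n y - lam / 2 * ‖y‖ ^ 2) atTop
      (𝓝 (flim y - lam / 2 * ‖y‖ ^ 2)) := fun y => (hptws y).sub_const _
  obtain ⟨C, hC⟩ := exists_forall_norm_le_of_concaveOn hconc
    (fun n x => (hg n x).sub_half_mul_norm_sq lam) (fun y => (hlim y).bddBelow_range)
    (hlim 0).bddAbove_range R
  refine ⟨2 * C, fun n x hx => ?_⟩
  have hCn := hC n x hx
  have hClim : ‖glim x - lam • x‖ ≤ C :=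
    le_of_tendsto' ((tendsto_gradient_of_tendsto hconc hg hglim hptws x).sub_const _).norm
      fun m => hC m x hx
  calc ‖g n x - glim x‖ = ‖(g n x - lam • x) - (glim x - lam • x)‖ := by
        rw [sub_sub_sub_cancel_right]
    _ ≤ 2 * C := by linarith [norm_sub_le (g n x - lam • x) (glim x - lam • x)]

end GradientCurve

theorem gradient_curves_stable_under_convergence_general
    {E : Type*} [NormedAddCommGroup E] [InnerProductSpace ℝ E] [FiniteDimensional ℝ E]
    (lam : ℝ) (f : ℕ → E → ℝ) (flim : E → ℝ)
    (g : ℕ → E → E) (glim : E → E)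
    (hconc : ∀ n, ConcaveOn ℝ Set.univ (fun y => f n y - lam / 2 * ‖y‖ ^ 2))
    (hg : ∀ n x, HasFDerivAt (f n) (innerSL ℝ (g n x)) x)
    (hgc : ∀ n, Continuous (g n))
    (hglim : ∀ x, HasFDerivAt flim (innerSL ℝ (glim x)) x)
    (hglimc : Continuous glim)
    (hptws : ∀ y, Filter.Tendsto (fun n => f n y) Filter.atTop (nhds (flim y)))
    (α : ℕ → ℝ → E) (αlim : ℝ → E)
    (hα : ∀ n, ∀ t ∈ Set.Ici (0 : ℝ), HasDerivWithinAt (α n) (g n (α n t)) (Set.Ici 0) t)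
    (hαlim : ∀ t ∈ Set.Ici (0 : ℝ), HasDerivWithinAt αlim (glim (αlim t)) (Set.Ici 0) t)
    (h0 : Filter.Tendsto (fun n => α n 0) Filter.atTop (nhds (αlim 0))) :
    ∀ t ≥ (0 : ℝ), Filter.Tendsto (fun n => α n t) Filter.atTop (nhds (αlim t)) := by
  intro T hT
  have hαc : ContinuousOn αlim (Icc 0 T) := fun t ht =>
    (hαlim t ht.1).continuousWithinAt.mono Icc_subset_Ici_self
  obtain ⟨R, hR⟩ := (isCompact_Icc.image_of_continuousOn hαc).isBounded.subset_closedBall (0 : E)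
  obtain ⟨C, hC⟩ := exists_norm_gradient_sub_le hconc hg hglim hptws R
  have hint : Tendsto (fun n => ∫ s in (0 : ℝ)..T, ‖g n (αlim s) - glim (αlim s)‖ ^ 2) atTop
      (𝓝 0) :=
    tendsto_intervalIntegral_zero_of_norm_le hT
      (fun n => (((hgc n).comp_continuousOn hαc).sub (hglimc.comp_continuousOn hαc)).norm.pow 2)
      (fun n s hs => by
        simpa using pow_le_pow_left₀ (norm_nonneg _) (hC n _ (hR (mem_image_of_mem _ hs))) 2)
      (fun s _ => by
        simpa using ((tendsto_gradient_of_tendsto hconc hg hglim hptws (αlim s)).sub_const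
          (glim (αlim s))).norm.pow 2)
  have hsq : Tendsto (fun n => ‖α n T - αlim T‖ ^ 2) atTop (𝓝 0) := by
    refine squeeze_zero (fun n => sq_nonneg _) (fun n => norm_sub_sq_le_of_hasDerivWithinAt hT
      (inner_sub_le_of_concaveOn_sub_mul_norm_sq (hconc n) (hg n)) (hgc n) hglimc (hα n) hαlim) ?_
    simpa using (((h0.sub_const (αlim 0)).norm.pow 2).add hint).const_mul
      (exp ((2 * |lam| + 1) * T))
  rw [tendsto_iff_norm_sub_tendsto_zero]
  simpa using hsq.sqrt

/-- Stability of gradient curves of λ-concave functions under pointwise convergence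
(linear model of Lemma 2.3). -/
theorem gradient_curves_stable_under_convergence
    {E : Type*} [NormedAddCommGroup E] [InnerProductSpace ℝ E] [FiniteDimensional ℝ E]
    (lam : ℝ) (f : ℕ → E → ℝ) (flim : E → ℝ)
    (g : ℕ → E → E) (glim : E → E)
    (hconc : ∀ n, ConcaveOn ℝ Set.univ (fun y => f n y - lam / 2 * ‖y‖ ^ 2))
    (hconclim : ConcaveOn ℝ Set.univ (fun y => flim y - lam / 2 * ‖y‖ ^ 2))
    (hg : ∀ n x, HasFDerivAt (f n) (innerSL ℝ (g n x)) x)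
    (hgc : ∀ n, Continuous (g n))
    (hglim : ∀ x, HasFDerivAt flim (innerSL ℝ (glim x)) x)
    (hglimc : Continuous glim)
    (hptws : ∀ y, Filter.Tendsto (fun n => f n y) Filter.atTop (nhds (flim y)))
    (α : ℕ → ℝ → E) (αlim : ℝ → E)
    (hα : ∀ n, ∀ t ∈ Set.Ici (0 : ℝ), HasDerivWithinAt (α n) (g n (α n t)) (Set.Ici 0) t)
    (hαlim : ∀ t ∈ Set.Ici (0 : ℝ), HasDerivWithinAt αlim (glim (αlim t)) (Set.Ici 0) t)
    (h0 : Filter.Tendsto (fun n => α n 0) Filter.atTop (nhds (αlim 0))) :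
    ∀ t ≥ (0 : ℝ), Filter.Tendsto (fun n => α n t) Filter.atTop (nhds (αlim t)) :=
  gradient_curves_stable_under_convergence_general lam f flim g glim hconc hg hgc hglim hglimc hptws
    α αlim hα hαlim h0
end
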